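/- Let a ≠ 0 and let X, Y, P₁, P₂ be real numbers with X ≠ Y, X ≠ 0, Y ≠ 0 and XY < 0. Define x = (2X + 2Y − ω₁ + 4ω₂)/(4a), y = √(−XY)/a, p_x = 2a(X·P₁ − Y·P₂)/(X−Y), p_y = 2a√(−XY)·(P₁−P₂)/(X−Y). Then H_KdV5(p_x,p_y,x,y) = (Φ(X,P₁) − Φ(Y,P₂))/(X−Y). -/
import Mathlib


/-- The KdV₅ Hamiltonian. -/
noncomputable def HKdV5 (a ω₁ ω₂ μ : ℝ) (px py x y : ℝ) : ℝ :=
  (1/2)*(px^2 + py^2) + (1/2)*(ω₁*x^2 + ω₂*y^2) + a*x*y^2 + 2*a*x^3 + μ/(2*y^2)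

/-- The auxiliary Stäckel function `Φ(ξ,π)`. -/
noncomputable def PhiKdV5 (a ω₁ ω₂ μ : ℝ) (ξ π : ℝ) : ℝ :=
  (4*ξ^5 + (-4*ω₁ + 24*ω₂)*ξ^4 + (ω₁ - 4*ω₂)*(ω₁ - 12*ω₂)*ξ^3
    + (32*a^4*π^2 + 2*ω₁^2*ω₂ - 16*ω₁*ω₂^2 + 32*ω₂^3)*ξ^2 + 8*μ*a^4) / (16*ξ*a^2)

/-- in the canonical separated variables `(P₁,X,P₂,Y)`, the KdV₅ Hamiltonian
takes the generalized Stäckel form `H = (Φ(X,P₁) − Φ(Y,P₂))/(X−Y)`. -/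
theorem HKdV5_separated_form (a ω₁ ω₂ μ : ℝ) (ha : a ≠ 0)
    (X Y P₁ P₂ : ℝ) (hXY : X ≠ Y) (hX : X ≠ 0) (hY : Y ≠ 0) (hneg : X*Y < 0) :
    HKdV5 a ω₁ ω₂ μ
        (2*a*(X*P₁ - Y*P₂)/(X - Y))
        (2*a*Real.sqrt (-(X*Y))*(P₁ - P₂)/(X - Y))
        ((2*X + 2*Y - ω₁ + 4*ω₂)/(4*a))
        (Real.sqrt (-(X*Y))/a)
      = (PhiKdV5 a ω₁ ω₂ μ X P₁ - PhiKdV5 a ω₁ ω₂ μ Y P₂) / (X - Y) := by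
  have hsq : Real.sqrt (-(X*Y)) ^ 2 = -(X*Y) := Real.sq_sqrt (by linarith)
  have hs : Real.sqrt (-(X*Y)) ≠ 0 := by
    intro h
    rw [h] at hsq; nlinarith
  have hd : X - Y ≠ 0 := sub_ne_zero.mpr hXY
  simp only [HKdV5, PhiKdV5, div_pow, mul_pow, hsq]
  field_simp
  ring
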